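/- arXiv:math/0207065 — 2 statements merged into one kernel-verified Lean document; each statement's English description precedes it below -/
import Mathlib

section
/- Let β = (β_i)_{|i|≤m} be a real multisequence indexed by multi-indices i ∈ ℤ₊^d with |i| ≤ m, let K ⊆ ℝ^d be closed, and let M_K(β) be the convex set of positive Borel measures ν supported in K with ∫ t^i dν = β_i for all |i| ≤ m. If ν is an extreme point of M_K(β), then ν is finitely atomic, and the number of atoms is at most the dimension of the image of ℝ_m[t₁,...,t_d] in L¹(ν). -/
open MeasureTheory MvPolynomial

/-- The closed support of a Borel measure. -/
def msupport {E : Type*} [TopologicalSpace E] [MeasurableSpace E] (μ : Measure E) : Set E :=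
  {x | ∀ U ∈ nhds x, μ U ≠ 0}

/-- The set of representing measures for the truncated real multisequence `β`,
supported in the closed set `K`: positive Borel measures `ν` with `supp ν ⊆ K` and
`∫ t^i dν = β_i` for all multi-indices `i` with `|i| ≤ m`. -/
def MKset (d m : ℕ) (K : Set (Fin d → ℝ)) (β : (Fin d → ℕ) → ℝ) :
    Set (Measure (Fin d → ℝ)) :=
  {ν | msupport ν ⊆ K ∧ ∀ i : Fin d → ℕ, (∑ k, i k) ≤ m →
      Integrable (fun t => ∏ k, t k ^ i k) ν ∧ ∫ t, ∏ k, t k ^ i k ∂ν = β i}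

/-- The linear map sending a polynomial to its class in the space of
`ν`-a.e. equivalence classes of functions (so that the image of `ℝ_m[t]` is the
image of `ℝ_m[t]` in `L¹(ν)` when the polynomials are `ν`-integrable). -/
noncomputable def polyAE (d : ℕ) (ν : Measure (Fin d → ℝ)) :
    MvPolynomial (Fin d) ℝ →ₗ[ℝ] ((Fin d → ℝ) →ₘ[ν] ℝ) where
  toFun p := AEEqFun.mk (fun t => eval t p) p.continuous_eval.aestronglyMeasurable
  map_add' p q := by
    show AEEqFun.mk _ _ = AEEqFun.mk _ _ + AEEqFun.mk _ _
    rw [AEEqFun.mk_add_mk, AEEqFun.mk_eq_mk]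
    filter_upwards with t
    simp
  map_smul' c p := by
    show AEEqFun.mk _ _ = c • AEEqFun.mk _ _
    rw [AEEqFun.smul_mk, AEEqFun.mk_eq_mk]
    filter_upwards with t
    simp [MvPolynomial.smul_eval]

/-!
If `ν` is an extreme point of `M_K(β)` and a measurable `g` with `|g| ≤ 1` annihilates all moments
of degree `≤ m`, then `ν` is the midpoint of the representing measures `(1 + g) ν` and `(1 - g) ν`,
so `g = 0` `ν`-a.e. Suppose the support of `ν` had more points than the dimension `n` of the image
of `ℝ_m[t]` in `L¹(ν)`. Separate them by disjoint open sets `V_x`: the functionals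
`p ↦ ∫_{V_x} p dν` factor through that image, hence are linearly dependent, and a dependency `c`
yields such a `g = ∑ c_x 1_{V_x}` which is nonzero on some `V_x` of positive measure. So the support
has at most `n` points, and a finite measure with finite support is the sum of its atoms.
-/

open Function
open scoped NNReal ENNReal

section MeasureSupport

variable {X : Type*} [TopologicalSpace X] [MeasurableSpace X]

theorem msupport_eq_support (μ : Measure X) : msupport μ = μ.support := by
  ext x
  simp [msupport, Measure.mem_support_iff_forall, pos_iff_ne_zero]

variable [HereditarilyLindelofSpace X] [T1Space X] {μ : Measure X}

theorem measure_singleton_ne_zero_of_finite_support (hfin : μ.support.Finite) {x : X}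
    (hx : x ∈ μ.support) : μ {x} ≠ 0 := by
  have hU : IsOpen (μ.support \ {x})ᶜ := hfin.sdiff.isClosed.isOpen_compl
  have hpos := (Measure.mem_support_iff_forall x).1 hx _ (hU.mem_nhds (by simp))
  rw [Set.compl_sdiff] at hpos
  have := hpos.trans_le (measure_union_le {x} μ.supportᶜ)
  simpa using this.ne'

theorem eq_sum_smul_dirac_of_finite_support [OpensMeasurableSpace X] (hfin : μ.support.Finite) :
    μ = ∑ x ∈ hfin.toFinset, μ {x} • Measure.dirac x := by
  calc μ = μ.restrict (⋃ x ∈ hfin.toFinset, {x}) := by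
          rw [Measure.restrict_eq_self_of_ae_mem]
          simpa using Measure.support_mem_ae
    _ = ∑ x ∈ hfin.toFinset, μ {x} • Measure.dirac x := by
          rw [Measure.restrict_biUnion_finset (by simp [Set.Pairwise, onFun])
            (fun _ => measurableSet_singleton _), Measure.sum_fintype]
          simp_rw [Measure.restrict_singleton]
          exact Finset.sum_coe_sort hfin.toFinset (fun x => μ {x} • Measure.dirac x)

end MeasureSupport

theorem exists_ne_zero_sum_smul_eq_zero_of_ker_le {𝕜 M N ι : Type*} [Field 𝕜] [AddCommGroup M]
    [Module 𝕜 M] [Module.Finite 𝕜 M] [AddCommGroup N] [Module 𝕜 N] [Fintype ι] (f : M →ₗ[𝕜] N)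
    (φ : ι → Module.Dual 𝕜 M) (hφ : ∀ j, LinearMap.ker f ≤ LinearMap.ker (φ j))
    (hcard : Module.finrank 𝕜 (LinearMap.range f) < Fintype.card ι) :
    ∃ c : ι → 𝕜, c ≠ 0 ∧ ∑ j, c j • φ j = 0 := by
  let φ' : ι → Module.Dual 𝕜 (M ⧸ LinearMap.ker f) := fun j => (LinearMap.ker f).liftQ (φ j) (hφ j)
  have hdep : ¬LinearIndependent 𝕜 φ' := fun hli => by
    have := hli.fintype_card_le_finrank
    rw [Subspace.dual_finrank_eq, f.quotKerEquivRange.finrank_eq] at this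
    omega
  obtain ⟨c, hc, j, hj⟩ := Fintype.not_linearIndependent_iff.1 hdep
  refine ⟨c, Function.ne_iff.2 ⟨j, hj⟩, LinearMap.ext fun x => ?_⟩
  simpa [φ'] using congrArg (fun ψ => ψ (Submodule.Quotient.mk x)) hc

section StepFunction

variable {α ι : Type*} [Fintype ι] {V : ι → Set α}

theorem sum_indicator_apply_of_mem {M : Type*} [AddCommMonoid M] (hV : Pairwise (Disjoint on V))
    (f : ι → α → M) {j : ι} {t : α} (ht : t ∈ V j) : ∑ i, (V i).indicator (f i) t = f j t := by
  rw [Finset.sum_eq_single j (fun i _ hij => Set.indicator_of_notMem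
    (Set.disjoint_left.1 (hV hij.symm) ht) _) (by simp), Set.indicator_of_mem ht]

theorem abs_sum_indicator_const_le_one (hV : Pairwise (Disjoint on V)) {c : ι → ℝ}
    (hc : ∀ i, |c i| ≤ 1) (t : α) : |∑ i, (V i).indicator (fun _ => c i) t| ≤ 1 := by
  by_cases ht : ∃ j, t ∈ V j
  · obtain ⟨j, hj⟩ := ht
    rw [sum_indicator_apply_of_mem hV _ hj]
    exact hc j
  · simp [Set.indicator_of_notMem (not_exists.1 ht _)]

theorem integral_sum_indicator_const_mul [MeasurableSpace α] {μ : Measure α}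
    (hV : ∀ i, MeasurableSet (V i)) (c : ι → ℝ) {f : α → ℝ} (hf : Integrable f μ) :
    ∫ t, (∑ i, (V i).indicator (fun _ => c i) t) * f t ∂μ = ∑ i, c i * ∫ t in V i, f t ∂μ := by
  simp_rw [Finset.sum_mul, ← Set.indicator_mul_left]
  rw [integral_finsetSum _ fun i _ => (hf.const_mul (c i)).indicator (hV i)]
  simp_rw [integral_indicator (hV _), integral_const_mul]

end StepFunction

theorem half_smul_withDensity_add_half_smul_withDensity {α : Type*} [MeasurableSpace α]
    (μ : Measure α) {g : α → ℝ} (hgm : Measurable g) (hg : ∀ t, |g t| ≤ 1) :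
    (1 / 2 : ℝ≥0) • μ.withDensity (fun t => ENNReal.ofReal (1 + g t))
      + (1 / 2 : ℝ≥0) • μ.withDensity (fun t => ENNReal.ofReal (1 - g t)) = μ := by
  have hmid : ∀ t, ((1 / 2 : ℝ≥0) : ℝ≥0∞) * ENNReal.ofReal (1 + g t)
      + ((1 / 2 : ℝ≥0) : ℝ≥0∞) * ENNReal.ofReal (1 - g t) = 1 := fun t => by
    obtain ⟨hlo, hhi⟩ := abs_le.1 (hg t)
    rw [← mul_add, ← ENNReal.ofReal_add (by linarith) (by linarith), add_add_sub_cancel,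
      one_add_one_eq_two, ENNReal.ofReal_ofNat]
    norm_num [ENNReal.inv_mul_cancel]
  change ((1 / 2 : ℝ≥0) : ℝ≥0∞) • _ + ((1 / 2 : ℝ≥0) : ℝ≥0∞) • _ = μ
  rw [← withDensity_smul _ (by fun_prop),
    ← withDensity_smul _ (by fun_prop), ← withDensity_add_left (by fun_prop)]
  conv_rhs => rw [← withDensity_one (μ := μ)]
  exact congrArg _ (funext hmid)

section RepresentingMeasures

variable {d m : ℕ} {K : Set (Fin d → ℝ)} {β : (Fin d → ℕ) → ℝ} {ν : Measure (Fin d → ℝ)}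

theorem isFiniteMeasure_of_mem_MKset (hν : ν ∈ MKset d m K β) : IsFiniteMeasure ν := by
  have h := (hν.2 0 (by simp)).1
  simp only [Pi.zero_apply, pow_zero, Finset.prod_const_one] at h
  exact (integrable_const_iff.1 h).resolve_left one_ne_zero

theorem withDensity_one_add_mem_MKset (hν : ν ∈ MKset d m K β) {g : (Fin d → ℝ) → ℝ}
    (hgm : Measurable g) (hg : ∀ t, |g t| ≤ 1)
    (hg0 : ∀ i : Fin d → ℕ, ∑ k, i k ≤ m → ∫ t, g t * ∏ k, t k ^ i k ∂ν = 0) :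
    ν.withDensity (fun t => ENNReal.ofReal (1 + g t)) ∈ MKset d m K β := by
  have hρ : Measurable fun t => (1 + g t).toNNReal := by fun_prop
  have hρ' : ∀ t, ((1 + g t).toNNReal : ℝ) = 1 + g t := fun t =>
    Real.coe_toNNReal _ (by linarith [(abs_le.1 (hg t)).1])
  refine ⟨?_, fun i hi => ?_⟩
  · rw [msupport_eq_support]
    exact (withDensity_absolutelyContinuous _ _).support_mono.trans (msupport_eq_support ν ▸ hν.1)
  obtain ⟨hint, hβ⟩ := hν.2 i hi
  have hgint : Integrable (fun t => g t * ∏ k, t k ^ i k) ν :=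
    hint.bdd_mul hgm.aestronglyMeasurable (ae_of_all _ fun t => (Real.norm_eq_abs _).trans_le (hg t))
  have hsmul : (fun t => (1 + g t).toNNReal • ∏ k, t k ^ i k)
      = fun t => (∏ k, t k ^ i k) + g t * ∏ k, t k ^ i k := by
    ext t
    rw [NNReal.smul_def, hρ', smul_eq_mul, add_mul, one_mul]
  refine ⟨(integrable_withDensity_iff_integrable_smul hρ).2 (hsmul ▸ hint.add hgint), ?_⟩
  change ∫ t, _ ∂(ν.withDensity fun t => ((1 + g t).toNNReal : ℝ≥0∞)) = β i
  rw [integral_withDensity_eq_integral_smul hρ, hsmul, integral_add hint hgint, hβ, hg0 i hi,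
    add_zero]

theorem ae_eq_zero_of_mem_extremePoints (hν : ν ∈ (MKset d m K β).extremePoints ℝ≥0)
    {g : (Fin d → ℝ) → ℝ} (hgm : Measurable g) (hg : ∀ t, |g t| ≤ 1)
    (hg0 : ∀ i : Fin d → ℕ, ∑ k, i k ≤ m → ∫ t, g t * ∏ k, t k ^ i k ∂ν = 0) :
    g =ᵐ[ν] 0 := by
  have := isFiniteMeasure_of_mem_MKset hν.1
  have hplus := withDensity_one_add_mem_MKset hν.1 hgm hg hg0
  have hminus : ν.withDensity (fun t => ENNReal.ofReal (1 - g t)) ∈ MKset d m K β := by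
    simpa only [sub_eq_add_neg] using withDensity_one_add_mem_MKset (g := fun t => -g t) hν.1 hgm.neg
      (fun t => (abs_neg (g t)).trans_le (hg t))
      (fun i hi => by simp only [neg_mul, integral_neg, hg0 i hi, neg_zero])
  have heq := (hν.2 hplus hminus ⟨1 / 2, 1 / 2, by norm_num, by norm_num, add_halves 1,
    half_smul_withDensity_add_half_smul_withDensity ν hgm hg⟩)
  conv_rhs at heq => rw [← withDensity_one (μ := ν)]
  filter_upwards [(withDensity_eq_iff_of_sigmaFinite (by fun_prop) aemeasurable_const).1 heq]
    with t ht
  simpa using ENNReal.ofReal_eq_one.1 ht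

end RepresentingMeasures

section Polynomials

variable {d m : ℕ} {ν : Measure (Fin d → ℝ)}

theorem integrable_eval_of_mem_restrictTotalDegree
    (hν : ∀ i : Fin d → ℕ, ∑ k, i k ≤ m → Integrable (fun t => ∏ k, t k ^ i k) ν)
    {p : MvPolynomial (Fin d) ℝ} (hp : p ∈ restrictTotalDegree (Fin d) ℝ m) :
    Integrable (fun t => eval t p) ν := by
  simp_rw [eval_eq']
  refine integrable_finsetSum _ fun s hs => (hν s ?_).const_mul _
  rw [← Finsupp.sum_fintype s (fun _ e => e) fun _ => rfl]
  exact (mem_restrictSupport_iff ℝ).1 hp hs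

theorem exists_mem_restrictTotalDegree_eval_eq {i : Fin d → ℕ} (hi : ∑ k, i k ≤ m) :
    ∃ p ∈ restrictTotalDegree (Fin d) ℝ m, ∀ t, eval t p = ∏ k, t k ^ i k := by
  refine ⟨monomial (Finsupp.equivFunOnFinite.symm i) 1, ?_, fun t => ?_⟩
  · rw [mem_restrictTotalDegree, totalDegree_monomial _ one_ne_zero,
      Finsupp.sum_fintype _ _ fun _ => rfl]
    exact hi
  · rw [eval_monomial, one_mul, Finsupp.prod_fintype _ _ fun _ => pow_zero _]
    rfl

noncomputable def setIntegralEval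
    (hν : ∀ p ∈ restrictTotalDegree (Fin d) ℝ m, Integrable (fun t => eval t p) ν)
    (s : Set (Fin d → ℝ)) : Module.Dual ℝ (restrictTotalDegree (Fin d) ℝ m) where
  toFun p := ∫ t in s, eval t p.1 ∂ν
  map_add' p q := by
    simp only [Submodule.coe_add, map_add]
    exact integral_add (hν p p.2).restrict (hν q q.2).restrict
  map_smul' c p := by
    simp only [Submodule.coe_smul, smul_eval, RingHom.id_apply, smul_eq_mul]
    exact integral_const_mul c _

theorem setIntegralEval_apply
    (hν : ∀ p ∈ restrictTotalDegree (Fin d) ℝ m, Integrable (fun t => eval t p) ν)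
    (s : Set (Fin d → ℝ)) (p : restrictTotalDegree (Fin d) ℝ m) :
    setIntegralEval hν s p = ∫ t in s, eval t p.1 ∂ν :=
  rfl

theorem ker_polyAE_le_ker_setIntegralEval
    (hν : ∀ p ∈ restrictTotalDegree (Fin d) ℝ m, Integrable (fun t => eval t p) ν)
    (s : Set (Fin d → ℝ)) :
    LinearMap.ker ((polyAE d ν).domRestrict (restrictTotalDegree (Fin d) ℝ m))
      ≤ LinearMap.ker (setIntegralEval hν s) := by
  intro p hp
  have hp' : ⇑(polyAE d ν p) =ᵐ[ν] 0 := by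
    rw [show polyAE d ν p = 0 from hp]
    exact AEEqFun.coeFn_zero
  have hp0 : (fun t => eval t p.1) =ᵐ[ν] 0 := (AEEqFun.coeFn_mk _ _).symm.trans hp'
  simp [setIntegralEval, integral_congr_ae (ae_restrict_of_ae hp0)]

end Polynomials

theorem card_le_finrank_of_mem_extremePoints {d m : ℕ} {K : Set (Fin d → ℝ)}
    {β : (Fin d → ℕ) → ℝ} {ν : Measure (Fin d → ℝ)}
    (hν : ν ∈ (MKset d m K β).extremePoints ℝ≥0) (T : Finset (Fin d → ℝ)) (hT : ↑T ⊆ ν.support) :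
    T.card ≤ Module.finrank ℝ ((restrictTotalDegree (Fin d) ℝ m).map (polyAE d ν)) := by
  obtain ⟨V, hV, hVdisj⟩ := T.finite_toSet.t2_separation
  have hdisj : Pairwise (Disjoint on fun x : T => V x) := fun x y hxy =>
    hVdisj x.2 y.2 (Subtype.coe_injective.ne hxy)
  have hVm : ∀ x : T, MeasurableSet (V x) := fun x => (hV x).2.measurableSet
  have hint : ∀ p ∈ restrictTotalDegree (Fin d) ℝ m, Integrable (fun t => eval t p) ν :=
    fun p hp => integrable_eval_of_mem_restrictTotalDegree (fun i hi => (hν.1.2 i hi).1) hp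
  by_contra! hcard
  obtain ⟨c, hc0, hc⟩ := exists_ne_zero_sum_smul_eq_zero_of_ker_le _
    (fun x : T => setIntegralEval hint (V x)) (fun x => ker_polyAE_le_ker_setIntegralEval hint _)
    (by rwa [LinearMap.range_domRestrict, Fintype.card_coe])
  obtain ⟨x₀, hx₀⟩ := Function.ne_iff.1 hc0
  have hnorm : 0 < ‖c‖ := norm_pos_iff.2 hc0
  set g := fun t => ∑ x : T, (V x).indicator (fun _ => c x / ‖c‖) t
  have hg0 : g =ᵐ[ν] 0 := by
    refine ae_eq_zero_of_mem_extremePoints hν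
      (Finset.measurable_sum _ fun x _ => measurable_const.indicator (hVm x))
      (abs_sum_indicator_const_le_one hdisj fun x => ?_) fun i hi => ?_
    · rw [abs_div, abs_norm, div_le_one hnorm]
      exact norm_le_pi_norm c x
    · obtain ⟨p, hp, hpeval⟩ := exists_mem_restrictTotalDegree_eval_eq hi
      have hcp := congrArg (fun φ => φ ⟨p, hp⟩) hc
      simp only [LinearMap.sum_apply, LinearMap.smul_apply, setIntegralEval_apply, hpeval,
        smul_eq_mul, LinearMap.zero_apply] at hcp
      rw [integral_sum_indicator_const_mul hVm _ (hν.1.2 i hi).1]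
      simp_rw [div_mul_eq_mul_div, ← Finset.sum_div, hcp, zero_div]
  have hpos : 0 < ν (V x₀) :=
    (Measure.mem_support_iff_forall _).1 (hT x₀.2) _ ((hV x₀).2.mem_nhds (hV x₀).1)
  refine hpos.ne' (measure_mono_null (fun t ht => ?_) (ae_iff.1 hg0))
  simp only [Set.mem_ofPred_eq, Pi.zero_apply, g, sum_indicator_apply_of_mem hdisj _ ht]
  exact div_ne_zero hx₀ hnorm.ne'

/-- An extreme point of the convex set `M_K(β)` of representing measures for
`β^{(m)}` supported in `K` is finitely atomic, with at most
`dim (image of ℝ_m[t] in L¹(ν))` atoms. -/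
theorem extreme_point_finitely_atomic (d m : ℕ) (K : Set (Fin d → ℝ))
    (β : (Fin d → ℕ) → ℝ) (ν : Measure (Fin d → ℝ))
    (hν : ν ∈ MKset d m K β)
    (hext : ∀ ν₁ ∈ MKset d m K β, ∀ ν₂ ∈ MKset d m K β, ∀ a b : NNReal,
      0 < a → 0 < b → a + b = 1 → ν = a • ν₁ + b • ν₂ → ν₁ = ν ∧ ν₂ = ν) :
    ∃ N ≤ Module.finrank ℝ ((restrictTotalDegree (Fin d) ℝ m).map (polyAE d ν)),
      ∃ (x : Fin N → (Fin d → ℝ)) (ρ : Fin N → ℝ),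
        Function.Injective x ∧ (∀ k, 0 < ρ k) ∧
        ν = ∑ k, ENNReal.ofReal (ρ k) • Measure.dirac (x k) := by
  have hextreme : ν ∈ (MKset d m K β).extremePoints ℝ≥0 := mem_extremePoints.2
    ⟨hν, fun ν₁ h₁ ν₂ h₂ ⟨a, b, ha, hb, hab, h⟩ => hext ν₁ h₁ ν₂ h₂ a b ha hb hab h.symm⟩
  have hcard := card_le_finrank_of_mem_extremePoints hextreme
  have hfin : ν.support.Finite := Set.not_infinite.1 fun hinf => by
    obtain ⟨T, hT, hTcard⟩ := hinf.exists_subset_card_eq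
      (Module.finrank ℝ ((restrictTotalDegree (Fin d) ℝ m).map (polyAE d ν)) + 1)
    have := hcard T hT
    omega
  have := isFiniteMeasure_of_mem_MKset hν
  let e := hfin.toFinset.equivFin.symm
  refine ⟨_, hcard _ hfin.coe_toFinset.subset, fun k => e k, fun k => (ν {(e k : Fin d → ℝ)}).toReal,
    Subtype.coe_injective.comp e.injective, fun k => ENNReal.toReal_pos
      (measure_singleton_ne_zero_of_finite_support hfin (hfin.mem_toFinset.1 (e k).2))
      (measure_ne_top _ _), ?_⟩
  simp_rw [ENNReal.ofReal_toReal (measure_ne_top _ _)]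
  conv_lhs => rw [eq_sum_smul_dirac_of_finite_support hfin]
  rw [e.sum_comp (fun x => ν {(x : Fin d → ℝ)} • Measure.dirac (x : Fin d → ℝ))]
  exact (Finset.sum_coe_sort hfin.toFinset fun x => ν {x} • Measure.dirac x).symm
end

section
/- If γ^{(2n)} has a representing measure and M(n)(γ) admits an analytic relation Z^k = ∑_{0≤i+j<k} a_ij Z̄^i Z^j for some k ≤ n, then γ^{(2n)} has a unique representing measure, which is finitely atomic with at most k² atoms. -/
open MeasureTheory
open scoped ComplexOrder

noncomputable instance : MeasurableSpace ℂ := borel _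
instance : BorelSpace ℂ := ⟨rfl⟩

/-- Index set for the moment matrix `M(n)`: pairs `(i, j)` with `i + j ≤ n`. -/
def MomIdx (n : ℕ) := {p : Fin (n + 1) × Fin (n + 1) // (p.1 : ℕ) + (p.2 : ℕ) ≤ n}

instance (n : ℕ) : Fintype (MomIdx n) := by unfold MomIdx; infer_instance

/-- The moment matrix `M(n)(γ)`. -/
noncomputable def momentMatrix (n : ℕ) (γ : ℕ → ℕ → ℂ) : Matrix (MomIdx n) (MomIdx n) ℂ :=
  fun r c => γ ((r.1.1 : ℕ) + (c.1.2 : ℕ)) ((r.1.2 : ℕ) + (c.1.1 : ℕ))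

/-- `μ` is a representing measure for the truncated moment sequence `γ^{(2n)}`. -/
def IsRepr (n : ℕ) (γ : ℕ → ℕ → ℂ) (μ : Measure ℂ) : Prop :=
  ∀ i j : ℕ, i + j ≤ 2 * n →
    Integrable (fun z : ℂ => (starRingEnd ℂ) z ^ i * z ^ j) μ ∧
    ∫ z, (starRingEnd ℂ) z ^ i * z ^ j ∂μ = γ i j

/-!
A representing measure `μ` integrates every row `z̄^i z^j` of `M(n)` against the relation
polynomial `p = z^k - q(z, z̄)` to zero. Since `|p|²` is a combination of such row products,
`∫ |p|² dμ = 0`, so `μ` lives on the zero set `V` of `p`. On `V` the relation reduces every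
monomial `z̄^i z^j` to a combination of those with `i, j < k`, while by Lagrange interpolation every
function on `V` is a polynomial in `z`. Hence these `k²` monomials span all functions on `V`, so
`|V| ≤ k²`, and the mass of each point of `V` is a combination of the moments `γ i j` with
`i, j < k`, which is the same for every representing measure.
-/

open ComplexConjugate

namespace MeasureTheory

variable {α : Type*} [MeasurableSpace α] {μ : Measure α}

def integralKer (μ : Measure α) : Submodule ℂ (α → ℂ) where
  carrier := {f | Integrable f μ ∧ ∫ x, f x ∂μ = 0}
  add_mem' := fun {f g} ⟨hf, hf0⟩ ⟨hg, hg0⟩ =>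
    ⟨hf.add hg, by simp only [Pi.add_apply, integral_add hf hg, hf0, hg0, add_zero]⟩
  zero_mem' := ⟨integrable_zero _ _ _, integral_zero _ _⟩
  smul_mem' := fun c f ⟨hf, hf0⟩ =>
    ⟨hf.smul c, by simp only [Pi.smul_apply, integral_smul, hf0, smul_zero]⟩

lemma ae_eq_zero_of_conj_mul_self_mem_integralKer {f : α → ℂ}
    (hf : (fun x => conj (f x) * f x) ∈ integralKer μ) : ∀ᵐ x ∂μ, f x = 0 := by
  obtain ⟨hint, hzero⟩ := hf
  have hnormSq : ∀ x, (conj (f x) * f x).re = Complex.normSq (f x) := fun x => by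
    rw [← Complex.normSq_eq_conj_mul_self, Complex.ofReal_re]
  have hint' : Integrable (fun x => Complex.normSq (f x)) μ := by
    simpa only [RCLike.re_to_complex, hnormSq] using hint.re
  have hzero' : ∫ x, Complex.normSq (f x) ∂μ = 0 := by
    simpa only [RCLike.re_to_complex, hnormSq, hzero, Complex.zero_re] using integral_re hint
  filter_upwards [(integral_eq_zero_iff_of_nonneg (fun x => Complex.normSq_nonneg _) hint').1
    hzero'] with x hx
  exact Complex.normSq_eq_zero.1 hx

namespace Measure

variable [MeasurableSingletonClass α]

lemma eq_sum_smul_dirac_of_ae_mem {V : Finset α} (hV : ∀ᵐ x ∂μ, x ∈ V) :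
    μ = ∑ p ∈ V, μ {p} • dirac p := by
  calc μ = μ.restrict (⋃ p ∈ V, {p}) := by
        rw [← Finset.set_biUnion_coe, Set.biUnion_of_singleton, restrict_eq_self_of_ae_mem hV]
    _ = ∑ p ∈ V, μ.restrict {p} := by
        rw [restrict_biUnion_finset _ fun _ => measurableSet_singleton _, sum_fintype,
          Finset.sum_coe_sort V fun p => μ.restrict {p}]
        intro p _ q _ hpq
        exact Set.disjoint_singleton.2 hpq
    _ = ∑ p ∈ V, μ {p} • dirac p := by simp only [restrict_singleton]

lemma exists_injective_sum_dirac [IsFiniteMeasure μ] {V : Finset α} (hV : ∀ᵐ x ∂μ, x ∈ V) :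
    ∃ N ≤ V.card, ∃ (x : Fin N → α) (ρ : Fin N → ℝ),
      Function.Injective x ∧ (∀ m, 0 < ρ m) ∧
      μ = ∑ m, ENNReal.ofReal (ρ m) • dirac (x m) := by
  classical
  set T := V.filter fun p => μ {p} ≠ 0
  let x : Fin T.card → α := fun m => T.equivFin.symm m
  refine ⟨T.card, Finset.card_filter_le _ _, x, fun m => μ.real {x m},
    Subtype.val_injective.comp T.equivFin.symm.injective,
    fun m => ENNReal.toReal_pos (Finset.mem_filter.1 (T.equivFin.symm m).2).2
      (measure_ne_top _ _), ?_⟩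
  calc μ = ∑ p ∈ T, μ {p} • dirac p := by
        refine (eq_sum_smul_dirac_of_ae_mem hV).trans (Finset.sum_filter_of_ne ?_).symm
        intro p _ hp
        contrapose! hp
        rw [hp, zero_smul]
    _ = ∑ p : T, μ {(p : α)} • dirac (p : α) := (Finset.sum_coe_sort T _).symm
    _ = ∑ m, ENNReal.ofReal (μ.real {x m}) • dirac (x m) := by
        rw [← T.equivFin.symm.sum_comp]
        simp only [measureReal_def, ENNReal.ofReal_toReal (measure_ne_top _ _), x]

end Measure

end MeasureTheory

namespace ComplexMoment

def mono (i j : ℕ) (z : ℂ) : ℂ := conj z ^ i * z ^ j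

lemma mono_mul_mono (i j i' j' : ℕ) (z : ℂ) :
    mono i j z * mono i' j' z = mono (i + i') (j + j') z := by
  simp only [mono, pow_add]; ring

lemma conj_mono (i j : ℕ) (z : ℂ) : conj (mono i j z) = mono j i z := by
  simp only [mono, map_mul, map_pow, Complex.conj_conj, mul_comm]

/-- Pairing a row `z̄^i z^j` of `momentMatrix` with its column `(p.1, p.2)` integrates
`mono i j * mono p.2 p.1`, so the column relation `Z^k = ∑ a p Z̄^p.1 Z^p.2` says that every row
is orthogonal to `relPoly k s a`. -/
def relPoly (k : ℕ) (s : Finset (ℕ × ℕ)) (a : ℕ × ℕ → ℂ) (z : ℂ) : ℂ :=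
  mono k 0 z - ∑ p ∈ s, a p * mono p.2 p.1 z

variable {k : ℕ} {s : Finset (ℕ × ℕ)} {a : ℕ × ℕ → ℂ} {i j : ℕ} {z : ℂ}

lemma conj_relPoly :
    conj (relPoly k s a z) = mono 0 k z - ∑ p ∈ s, conj (a p) * mono p.1 p.2 z := by
  simp only [relPoly, map_sub, map_sum, map_mul, conj_mono]

lemma mono_eq_sum_of_relPoly_eq_zero_of_le_left (hz : relPoly k s a z = 0) (hi : k ≤ i) :
    mono i j z = ∑ p ∈ s, a p * mono (i - k + p.2) (j + p.1) z := by
  have hk : mono k 0 z = ∑ p ∈ s, a p * mono p.2 p.1 z := sub_eq_zero.1 hz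
  calc mono i j z = mono (i - k) j z * mono k 0 z := by
        rw [mono_mul_mono, Nat.sub_add_cancel hi, add_zero]
    _ = _ := by
        rw [hk, Finset.mul_sum]
        exact Finset.sum_congr rfl fun p _ => by rw [mul_left_comm, mono_mul_mono]

lemma mono_eq_sum_of_relPoly_eq_zero_of_le_right (hz : relPoly k s a z = 0) (hj : k ≤ j) :
    mono i j z = ∑ p ∈ s, conj (a p) * mono (i + p.1) (j - k + p.2) z := by
  have hk : mono 0 k z = ∑ p ∈ s, conj (a p) * mono p.1 p.2 z := by
    rw [← sub_eq_zero, ← conj_relPoly, hz, map_zero]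
  calc mono i j z = mono i (j - k) z * mono 0 k z := by
        rw [mono_mul_mono, Nat.sub_add_cancel hj, add_zero]
    _ = _ := by
        rw [hk, Finset.mul_sum]
        exact Finset.sum_congr rfl fun p _ => by rw [mul_left_comm, mono_mul_mono]

def lowSpan (k : ℕ) (S : Finset ℂ) : Submodule ℂ (S → ℂ) :=
  Submodule.span ℂ (Set.range fun ij : Fin k × Fin k => fun z : S => mono ij.1 ij.2 z)

variable {S : Finset ℂ}

lemma restrict_mono_mem_lowSpan (hs : ∀ p ∈ s, p.1 + p.2 < k)
    (hS : ∀ z ∈ S, relPoly k s a z = 0) (i j : ℕ) :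
    (fun z : S => mono i j z) ∈ lowSpan k S := by
  induction h : i + j using Nat.strong_induction_on generalizing i j with
  | _ d ih =>
  have reduce (c : ℕ × ℕ → ℂ) (e : ℕ × ℕ → ℕ × ℕ) (hlt : ∀ p ∈ s, (e p).1 + (e p).2 < d)
      (heq : ∀ z ∈ S, mono i j z = ∑ p ∈ s, c p * mono (e p).1 (e p).2 z) :
      (fun z : S => mono i j z) ∈ lowSpan k S := by
    have hfun : (fun z : S => mono i j z) =
        ∑ p ∈ s, c p • fun z : S => mono (e p).1 (e p).2 z := by
      funext z
      simp only [heq z z.2, Finset.sum_apply, Pi.smul_apply, smul_eq_mul]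
    rw [hfun]
    exact Submodule.sum_mem _ fun p hp => Submodule.smul_mem _ _ (ih _ (hlt p hp) _ _ rfl)
  by_cases hi : k ≤ i
  · refine reduce _ (fun p => (i - k + p.2, j + p.1)) (fun p hp => ?_)
      fun z hz => mono_eq_sum_of_relPoly_eq_zero_of_le_left (hS z hz) hi
    have := hs p hp; omega
  by_cases hj : k ≤ j
  · refine reduce _ (fun p => (i + p.1, j - k + p.2)) (fun p hp => ?_)
      fun z hz => mono_eq_sum_of_relPoly_eq_zero_of_le_right (hS z hz) hj
    have := hs p hp; omega
  rw [not_le] at hi hj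
  exact Submodule.subset_span ⟨(⟨i, hi⟩, ⟨j, hj⟩), rfl⟩

/-- Every function on `S` is a polynomial in `z` by Lagrange interpolation, and every power of `z`
lies in `lowSpan`. -/
lemma lowSpan_eq_top (hs : ∀ p ∈ s, p.1 + p.2 < k) (hS : ∀ z ∈ S, relPoly k s a z = 0) :
    lowSpan k S = ⊤ := by
  classical
  refine Submodule.eq_top_iff'.2 fun f => ?_
  set P := Lagrange.interpolate S id fun z => if h : z ∈ S then f ⟨z, h⟩ else 0
  have hf : f = ∑ m ∈ Finset.range (P.natDegree + 1), P.coeff m • fun z : S => mono 0 m z := by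
    funext z
    have hz := Lagrange.eval_interpolate_at_node (fun z => if h : z ∈ S then f ⟨z, h⟩ else 0)
      (Set.injOn_id _) z.2
    simp only [id, z.2, dif_pos, Polynomial.eval_eq_sum_range] at hz
    simp only [Finset.sum_apply, Pi.smul_apply, smul_eq_mul, mono, pow_zero, one_mul]
    exact hz.symm
  rw [hf]
  exact Submodule.sum_mem _ fun m _ =>
    Submodule.smul_mem _ _ (restrict_mono_mem_lowSpan hs hS 0 m)

lemma card_le_sq_of_relPoly_eq_zero (hs : ∀ p ∈ s, p.1 + p.2 < k)
    (hS : ∀ z ∈ S, relPoly k s a z = 0) : S.card ≤ k ^ 2 :=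
  calc S.card = Module.finrank ℂ (S → ℂ) := by simp
    _ = Module.finrank ℂ (lowSpan k S) := by rw [lowSpan_eq_top hs hS, finrank_top]
    _ ≤ Fintype.card (Fin k × Fin k) := finrank_range_le_card _
    _ = k ^ 2 := by simp [sq]

lemma exists_sum_mono_eq (hs : ∀ p ∈ s, p.1 + p.2 < k) (hS : ∀ z ∈ S, relPoly k s a z = 0)
    (f : S → ℂ) : ∃ c : Fin k × Fin k → ℂ, ∀ z : S, ∑ ij, c ij * mono ij.1 ij.2 z = f z := by
  have hf : f ∈ lowSpan k S := lowSpan_eq_top hs hS ▸ Submodule.mem_top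
  obtain ⟨c, hc⟩ := (Submodule.mem_span_range_iff_exists_fun ℂ).1 hf
  refine ⟨c, fun z => ?_⟩
  simpa only [Finset.sum_apply, Pi.smul_apply, smul_eq_mul] using congrFun hc z

lemma exists_finset_eq_setOf_relPoly_eq_zero (hs : ∀ p ∈ s, p.1 + p.2 < k) :
    ∃ V : Finset ℂ, V.card ≤ k ^ 2 ∧ ∀ z, z ∈ V ↔ relPoly k s a z = 0 := by
  have hfin : {z | relPoly k s a z = 0}.Finite := by
    by_contra hinf
    obtain ⟨t, ht, htcard⟩ := Set.Infinite.exists_subset_card_eq hinf (k ^ 2 + 1)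
    have := card_le_sq_of_relPoly_eq_zero hs fun z hz => ht hz
    omega
  exact ⟨hfin.toFinset, card_le_sq_of_relPoly_eq_zero hs fun z hz => hfin.mem_toFinset.1 hz,
    fun z => hfin.mem_toFinset⟩

def lowIdx (k : ℕ) : Finset (ℕ × ℕ) := {p ∈ Finset.range k ×ˢ Finset.range k | p.1 + p.2 < k}

lemma sum_momIdx_ite_eq_sum_lowIdx {n k : ℕ} (hkn : k ≤ n) (a g : ℕ → ℕ → ℂ) :
    ∑ c : MomIdx n, (if (c.1.1 : ℕ) + c.1.2 < k then a c.1.1 c.1.2 else 0) * g c.1.1 c.1.2 =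
      ∑ p ∈ lowIdx k, a p.1 p.2 * g p.1 p.2 := by
  refine Finset.sum_bij_ne_zero (fun c _ _ => ((c.1.1 : ℕ), (c.1.2 : ℕ))) ?_ ?_ ?_ ?_
  · intro c _ hc
    have h : (c.1.1 : ℕ) + c.1.2 < k := (ite_ne_right_iff.1 (left_ne_zero_of_mul hc)).1
    simp only [lowIdx, Finset.mem_filter, Finset.mem_product, Finset.mem_range]
    omega
  · intro c _ _ d _ _ h
    obtain ⟨h1, h2⟩ := Prod.mk.inj h
    exact Subtype.ext (Prod.ext (Fin.ext h1) (Fin.ext h2))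
  · intro p hp hne
    simp only [lowIdx, Finset.mem_filter, Finset.mem_product, Finset.mem_range] at hp
    refine ⟨⟨(⟨p.1, by omega⟩, ⟨p.2, by omega⟩), by dsimp only; omega⟩, Finset.mem_univ _, ?_, rfl⟩
    rwa [if_pos hp.2]
  · intro c _ hc
    have h : (c.1.1 : ℕ) + c.1.2 < k := (ite_ne_right_iff.1 (left_ne_zero_of_mul hc)).1
    rw [if_pos h]

end ComplexMoment

open ComplexMoment

namespace IsRepr

variable {n k : ℕ} {γ : ℕ → ℕ → ℂ} {μ ν : Measure ℂ} {s : Finset (ℕ × ℕ)} {a : ℕ × ℕ → ℂ}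

lemma isFiniteMeasure (hμ : IsRepr n γ μ) : IsFiniteMeasure μ := by
  have h : Integrable (fun _ : ℂ => (1 : ℂ)) μ := by simpa using (hμ 0 0 (Nat.zero_le _)).1
  exact (integrable_const_iff.1 h).resolve_left one_ne_zero

lemma integrable_mono (hμ : IsRepr n γ μ) {i j : ℕ} (h : i + j ≤ 2 * n) :
    Integrable (mono i j) μ :=
  (hμ i j h).1

lemma integral_mono (hμ : IsRepr n γ μ) {i j : ℕ} (h : i + j ≤ 2 * n) :
    ∫ z, mono i j z ∂μ = γ i j :=
  (hμ i j h).2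

lemma mono_mul_relPoly_mem_integralKer (hμ : IsRepr n γ μ) (hkn : k ≤ n)
    (hs : ∀ p ∈ s, p.1 + p.2 ≤ n)
    (hrel : ∀ i j, i + j ≤ n → γ (i + k) j = ∑ p ∈ s, a p * γ (i + p.2) (j + p.1))
    {i j : ℕ} (hij : i + j ≤ n) :
    (fun z => mono i j z * relPoly k s a z) ∈ integralKer μ := by
  have hterm : ∀ p ∈ s, Integrable (fun z => a p * mono (i + p.2) (j + p.1) z) μ :=
    fun p hp => (IsRepr.integrable_mono hμ (by have := hs p hp; omega)).const_mul _
  have hfun : (fun z => mono i j z * relPoly k s a z) =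
      fun z => mono (i + k) j z - ∑ p ∈ s, a p * mono (i + p.2) (j + p.1) z := by
    funext z
    simp only [relPoly, mul_sub, Finset.mul_sum, mul_left_comm _ (a _), mono_mul_mono, add_zero]
  rw [hfun]
  refine ⟨(IsRepr.integrable_mono hμ (by omega)).sub (integrable_finsetSum _ hterm), ?_⟩
  dsimp only
  rw [integral_sub (IsRepr.integrable_mono hμ (by omega)) (integrable_finsetSum _ hterm),
    integral_finsetSum _ hterm, IsRepr.integral_mono hμ (by omega), hrel i j hij, sub_eq_zero]
  refine Finset.sum_congr rfl fun p hp => ?_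
  rw [integral_const_mul, IsRepr.integral_mono hμ (by have := hs p hp; omega)]

lemma ae_relPoly_eq_zero (hμ : IsRepr n γ μ) (hkn : k ≤ n) (hs : ∀ p ∈ s, p.1 + p.2 ≤ n)
    (hrel : ∀ i j, i + j ≤ n → γ (i + k) j = ∑ p ∈ s, a p * γ (i + p.2) (j + p.1)) :
    ∀ᵐ z ∂μ, relPoly k s a z = 0 := by
  refine ae_eq_zero_of_conj_mul_self_mem_integralKer ?_
  have hfun : (fun z => conj (relPoly k s a z) * relPoly k s a z) =
      (fun z => mono 0 k z * relPoly k s a z) -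
        ∑ p ∈ s, conj (a p) • fun z => mono p.1 p.2 z * relPoly k s a z := by
    funext z
    simp only [conj_relPoly, sub_mul, Finset.sum_mul, Pi.sub_apply, Finset.sum_apply,
      Pi.smul_apply, smul_eq_mul, mul_assoc]
  rw [hfun]
  exact sub_mem (IsRepr.mono_mul_relPoly_mem_integralKer hμ hkn hs hrel (by omega))
    (Submodule.sum_mem _ fun p hp => Submodule.smul_mem _ _
      (IsRepr.mono_mul_relPoly_mem_integralKer hμ hkn hs hrel (hs p hp)))

lemma measureReal_singleton_eq_sum (hμ : IsRepr n γ μ) (hkn : k ≤ n) {V : Set ℂ}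
    (hV : ∀ᵐ z ∂μ, z ∈ V) {p : ℂ} (c : Fin k × Fin k → ℂ)
    (hc : ∀ z ∈ V, ∑ ij, c ij * mono ij.1 ij.2 z = ({p} : Set ℂ).indicator (fun _ => 1) z) :
    (μ.real {p} : ℂ) = ∑ ij, c ij * γ ij.1 ij.2 := by
  have hdeg (ij : Fin k × Fin k) : (ij.1 : ℕ) + ij.2 ≤ 2 * n := by omega
  have hint : ∀ ij ∈ Finset.univ, Integrable (fun z => c ij * mono ij.1 ij.2 z) μ :=
    fun ij _ => (IsRepr.integrable_mono hμ (hdeg ij)).const_mul _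
  calc (μ.real {p} : ℂ) = ∫ z, ({p} : Set ℂ).indicator (fun _ => (1 : ℂ)) z ∂μ := by
        rw [integral_indicator_const _ (measurableSet_singleton p), Complex.real_smul, mul_one]
    _ = ∫ z, ∑ ij, c ij * mono ij.1 ij.2 z ∂μ :=
        integral_congr_ae (hV.mono fun z hz => (hc z hz).symm)
    _ = ∑ ij, c ij * γ ij.1 ij.2 := by
        rw [integral_finsetSum _ hint]
        exact Finset.sum_congr rfl fun ij _ => by
          rw [integral_const_mul, IsRepr.integral_mono hμ (hdeg ij)]

lemma eq_of_ae_mem (hμ : IsRepr n γ μ) (hν : IsRepr n γ ν) (hkn : k ≤ n) {V : Finset ℂ}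
    (hμV : ∀ᵐ z ∂μ, z ∈ V) (hνV : ∀ᵐ z ∂ν, z ∈ V)
    (hV : ∀ f : V → ℂ, ∃ c : Fin k × Fin k → ℂ, ∀ z : V, ∑ ij, c ij * mono ij.1 ij.2 z = f z) :
    μ = ν := by
  have := IsRepr.isFiniteMeasure hμ
  have := IsRepr.isFiniteMeasure hν
  rw [Measure.eq_sum_smul_dirac_of_ae_mem hμV, Measure.eq_sum_smul_dirac_of_ae_mem hνV]
  refine Finset.sum_congr rfl fun p _ => ?_
  obtain ⟨c, hc⟩ := hV fun z => ({p} : Set ℂ).indicator (fun _ => 1) z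
  have hreal : μ.real {p} = ν.real {p} := by
    exact_mod_cast (IsRepr.measureReal_singleton_eq_sum hμ hkn hμV c fun z hz => hc ⟨z, hz⟩).trans
      (IsRepr.measureReal_singleton_eq_sum hν hkn hνV c fun z hz => hc ⟨z, hz⟩).symm
  rw [(ENNReal.toReal_eq_toReal_iff' (measure_ne_top _ _) (measure_ne_top _ _)).1 hreal]

end IsRepr

/-- If `γ^{(2n)}` has a representing measure and `M(n)(γ)` admits an analytic relation
`Z^k = ∑_{i+j<k} a_{ij} Z̄^i Z^j` for some `k ≤ n`, then `γ^{(2n)}` has a unique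
representing measure, which is finitely atomic with at most `k²` atoms. -/
theorem analytic_relation_unique_representing_measure (n k : ℕ) (hkn : k ≤ n)
    (γ : ℕ → ℕ → ℂ) (a : ℕ → ℕ → ℂ)
    (hex : ∃ μ : Measure ℂ, IsRepr n γ μ)
    (hrel : ∀ r : MomIdx n,
      momentMatrix n γ r ⟨(⟨0, Nat.succ_pos n⟩, ⟨k, Nat.lt_succ_of_le hkn⟩), by simpa using hkn⟩ =
        ∑ c : MomIdx n,
          (if (c.1.1 : ℕ) + (c.1.2 : ℕ) < k then a (c.1.1 : ℕ) (c.1.2 : ℕ) else 0) *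
            momentMatrix n γ r c) :
    ∃ μ : Measure ℂ, IsRepr n γ μ ∧ (∀ ν : Measure ℂ, IsRepr n γ ν → ν = μ) ∧
      ∃ N ≤ k ^ 2, ∃ (x : Fin N → ℂ) (ρ : Fin N → ℝ),
        Function.Injective x ∧ (∀ m, 0 < ρ m) ∧
        μ = ∑ m, ENNReal.ofReal (ρ m) • Measure.dirac (x m) := by
  obtain ⟨μ, hμ⟩ := hex
  have hs : ∀ p ∈ lowIdx k, p.1 + p.2 < k := fun p hp => (Finset.mem_filter.1 hp).2
  have hrel' (i j : ℕ) (hij : i + j ≤ n) :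
      γ (i + k) j = ∑ p ∈ lowIdx k, a p.1 p.2 * γ (i + p.2) (j + p.1) := by
    have h := hrel ⟨(⟨i, by omega⟩, ⟨j, by omega⟩), hij⟩
    simp only [momentMatrix, add_zero] at h
    rwa [sum_momIdx_ite_eq_sum_lowIdx hkn a fun x y => γ (i + y) (j + x)] at h
  obtain ⟨V, hVcard, hV⟩ := exists_finset_eq_setOf_relPoly_eq_zero (a := fun p => a p.1 p.2) hs
  have hsupp (ν : Measure ℂ) (hν : IsRepr n γ ν) : ∀ᵐ z ∂ν, z ∈ V :=
    (IsRepr.ae_relPoly_eq_zero hν hkn (fun p hp => by have := hs p hp; omega) hrel').mono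
      fun z hz => (hV z).2 hz
  have := IsRepr.isFiniteMeasure hμ
  obtain ⟨N, hN, x, ρ, hx⟩ := Measure.exists_injective_sum_dirac (hsupp μ hμ)
  refine ⟨μ, hμ, fun ν hν => IsRepr.eq_of_ae_mem hν hμ hkn (hsupp ν hν) (hsupp μ hμ)
    (exists_sum_mono_eq hs fun z hz => (hV z).1 hz), N, hN.trans hVcard, x, ρ, hx⟩
end
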